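/- Let B be a unital associative F-algebra (possibly infinite-dimensional) that is a local ring (it has a unique maximal left ideal; equivalently, the non-units form a two-sided ideal). If B is zero product determined, then B = F·1, i.e., the structure map F → B is surjective (B is 1-dimensional over F). -/
import Mathlib


/-- A unital associative `F`-algebra `A` is *zero product determined* (zpd) if every
`F`-bilinear map `f : A × A → F` vanishing on pairs with zero product is of the form
`f(x, y) = Φ(xy)` for some linear `Φ`. -/
def IsZpd (F A : Type*) [Field F] [Ring A] [Algebra F A] : Prop :=
  ∀ f : A →ₗ[F] A →ₗ[F] F,
    (∀ a b : A, a * b = 0 → f a b = 0) →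
    ∃ Φ : A →ₗ[F] F, ∀ x y : A, f x y = Φ (x * y)
lemma nonunits_add' {B : Type*} [Ring B] [IsLocalRing B] {a b : B}
    (ha : ¬ IsUnit a) (hb : ¬ IsUnit b) : ¬ IsUnit (a + b) := by
  rintro ⟨u, hu⟩
  have h1 : (↑u⁻¹ : B) * a + (↑u⁻¹ : B) * b = 1 := by
    rw [← mul_add, ← hu, Units.inv_mul]
  rcases IsLocalRing.isUnit_or_isUnit_of_add_one h1 with hc | hc
  · exact ha (by simpa [← mul_assoc] using (u.isUnit.mul hc))
  · exact hb (by simpa [← mul_assoc] using (u.isUnit.mul hc))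

/-- a local zero product determined algebra is one-dimensional,
i.e. `B = F·1`. -/
theorem stmt_13 (F B : Type*) [Field F] [Ring B] [Algebra F B] [IsLocalRing B]
    (h : IsZpd F B) : Function.Surjective (algebraMap F B) := by
  by_contra hns
  rw [Function.Surjective] at hns
  push_neg at hns
  obtain ⟨b, hb⟩ := hns
  -- The nonunits form an F-submodule
  set M : Submodule F B :=
    { carrier := nonunits B
      zero_mem' := by simpa [nonunits] using not_isUnit_zero
      add_mem' := fun ha hb => nonunits_add' ha hb
      smul_mem' := by
        intro c x hx hu
        rcases eq_or_ne c 0 with rfl | hc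
        · rw [zero_smul] at hu; exact not_isUnit_zero hu
        · apply hx
          have hcu : IsUnit (algebraMap F B c) := (isUnit_iff_ne_zero.mpr hc).map _
          have : x = ↑hcu.unit⁻¹ * (algebraMap F B c * x) := by
            rw [← mul_assoc, IsUnit.val_inv_mul, one_mul]
          rw [Algebra.smul_def] at hu
          rw [this]
          exact (hcu.unit⁻¹).isUnit.mul hu } with hM
  -- α : B → F linear, α 1 = 1, α vanishes on M
  have h1M : Submodule.Quotient.mk (p := M) (1 : B) ≠ 0 := by
    rw [Ne, Submodule.Quotient.mk_eq_zero]
    exact fun hmem => hmem isUnit_one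
  have := (Module.forall_dual_apply_eq_zero_iff F (Submodule.Quotient.mk (p := M) (1 : B))).not
  rw [not_forall] at this
  obtain ⟨φ, hφ⟩ := this.mpr h1M
  set α : B →ₗ[F] F := (φ (Submodule.Quotient.mk (1 : B)))⁻¹ • (φ ∘ₗ M.mkQ) with hα
  have hα1 : α 1 = 1 := by
    simp only [hα, LinearMap.smul_apply, LinearMap.comp_apply, Submodule.mkQ_apply, smul_eq_mul]
    exact inv_mul_cancel₀ hφ
  have hαM : ∀ x : B, ¬ IsUnit x → α x = 0 := by
    intro x hx
    have : M.mkQ x = 0 := by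
      rw [Submodule.mkQ_apply, Submodule.Quotient.mk_eq_zero]; exact hx
    simp [hα, this]
  -- τ : B → F linear, τ 1 = 0, τ b = 1
  set S : Submodule F B := Submodule.span F {(1 : B)} with hS
  have hbS : b ∉ S := by
    intro hmem
    rw [hS, Submodule.mem_span_singleton] at hmem
    obtain ⟨c, hc⟩ := hmem
    exact hb c (by rw [Algebra.algebraMap_eq_smul_one]; exact hc)
  have hbQ : Submodule.Quotient.mk (p := S) b ≠ 0 := by
    rw [Ne, Submodule.Quotient.mk_eq_zero]; exact hbS
  have := (Module.forall_dual_apply_eq_zero_iff F (Submodule.Quotient.mk (p := S) b)).not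
  rw [not_forall] at this
  obtain ⟨ψ, hψ⟩ := this.mpr hbQ
  set τ : B →ₗ[F] F := (ψ (Submodule.Quotient.mk b))⁻¹ • (ψ ∘ₗ S.mkQ) with hτ
  have hτ1 : τ 1 = 0 := by
    have : S.mkQ 1 = 0 := by
      rw [Submodule.mkQ_apply, Submodule.Quotient.mk_eq_zero]
      exact Submodule.mem_span_singleton_self _
    simp [hτ, this]
  have hτb : τ b = 1 := by
    simp only [hτ, LinearMap.smul_apply, LinearMap.comp_apply, Submodule.mkQ_apply, smul_eq_mul]
    exact inv_mul_cancel₀ hψ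
  -- the bilinear map f(x,y) = α x * τ y
  set f : B →ₗ[F] B →ₗ[F] F := LinearMap.mk₂ F (fun x y => α x * τ y)
    (fun x x' y => by simp [add_mul])
    (fun c x y => by simp [smul_eq_mul, mul_assoc])
    (fun x y y' => by simp [mul_add])
    (fun c x y => by simp [smul_eq_mul]; ring) with hf
  have hzero : ∀ a c : B, a * c = 0 → f a c = 0 := by
    intro a c hac
    by_cases ha : IsUnit a
    · have : c = 0 := by
        have : c = ↑ha.unit⁻¹ * (a * c) := by
          rw [← mul_assoc, IsUnit.val_inv_mul, one_mul]
        rw [this, hac, mul_zero]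
      simp [hf, this]
    · simp [hf, hαM a ha]
  obtain ⟨Φ, hΦ⟩ := h f hzero
  have e1 : ∀ y : B, τ y = Φ y := by
    intro y
    have := hΦ 1 y
    simpa [hf, hα1] using this
  have e2 : ∀ x : B, (0 : F) = Φ x := by
    intro x
    have := hΦ x 1
    simpa [hf, hτ1] using this
  have : τ b = 0 := by rw [e1 b, ← e2 b]
  rw [hτb] at this
  exact one_ne_zero this
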